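/- Let X be a Banach space, let T be a bounded linear operator on X which is J^mix-class, and let M be a closed T-invariant subspace of X such that M ⊆ A_T^mix and A_T^mix \ M ≠ ∅. Then the induced operator T̂ : X/M → X/M, defined by T̂[x] = [Tx] on the quotient Banach space X/M, is J^mix-class. -/

import Mathlib

/-!
If `x ∈ A_T^mix \ M`, then `[x] ≠ 0`, and pushing the sequences witnessing `J_T^mix(x) = X`
through the quotient map (which is continuous, surjective and intertwines `T` and `T̂`)
shows `J_{T̂}^mix([x]) = X/M`.
-/

open Filter Topology

/-- The extended mixing limit set `J_T^mix(x)`: all `y` for which there exists a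
sequence `(x_n)` with `x_n → x` and `T^n x_n → y`. -/
noncomputable def Jmix {X : Type*} [SeminormedAddCommGroup X] [NormedSpace ℂ X]
    (T : X →L[ℂ] X) (x : X) : Set X :=
  {y | ∃ u : ℕ → X, Tendsto u atTop (𝓝 x) ∧ Tendsto (fun n => (T ^ n) (u n)) atTop (𝓝 y)}

section Semiconj

variable {X Y : Type*} [SeminormedAddCommGroup X] [NormedSpace ℂ X]
  [SeminormedAddCommGroup Y] [NormedSpace ℂ Y]
  {T : X →L[ℂ] X} {S : Y →L[ℂ] Y} {π : X → Y}

theorem mapsTo_Jmix_of_semiconj (hπ : Continuous π) (hST : Function.Semiconj π T S) (x : X) :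
    Set.MapsTo π (Jmix T x) (Jmix S (π x)) := by
  rintro y ⟨u, hux, huy⟩
  refine ⟨π ∘ u, (hπ.tendsto x).comp hux, ?_⟩
  have hpow (n : ℕ) (z : X) : (S ^ n) (π z) = π ((T ^ n) z) := by
    rw [FunLike.coe_pow_eq_iterate, FunLike.coe_pow_eq_iterate]
    exact (hST.iterate_right n z).symm
  simpa only [Function.comp_def, hpow] using (hπ.tendsto y).comp huy

theorem Jmix_eq_univ_of_semiconj (hπ : Continuous π) (hπsurj : Function.Surjective π)
    (hST : Function.Semiconj π T S) {x : X} (hx : Jmix T x = Set.univ) :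
    Jmix S (π x) = Set.univ := by
  refine Set.eq_univ_of_forall fun y => ?_
  obtain ⟨z, rfl⟩ := hπsurj y
  exact mapsTo_Jmix_of_semiconj hπ hST x (hx ▸ Set.mem_univ z)

end Semiconj

theorem stmt13_general {X : Type*} [NormedAddCommGroup X] [NormedSpace ℂ X]
    (T : X →L[ℂ] X)
    (M : Submodule ℂ X)
    (hMne : ({x : X | Jmix T x = Set.univ} \ (M : Set X)).Nonempty)
    (That : (X ⧸ M) →L[ℂ] (X ⧸ M))
    (hThat : ∀ x : X, That (M.mkQ x) = M.mkQ (T x)) :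
    ∃ q : X ⧸ M, q ≠ 0 ∧ Jmix That q = Set.univ := by
  obtain ⟨x, hxJ, hxM⟩ := hMne
  refine ⟨M.mkQ x, ?_, ?_⟩
  · simpa [Submodule.Quotient.mk_eq_zero] using hxM
  · exact Jmix_eq_univ_of_semiconj M.continuous_mkQ M.mkQ_surjective
      (fun z => (hThat z).symm) hxJ

set_option synthInstance.maxHeartbeats 1000000 in
set_option maxHeartbeats 1000000 in
/-- Let `T` be `J^mix`-class and let `M` be a closed `T`-invariant subspace with
`M ⊆ A_T^mix` and `A_T^mix \ M ≠ ∅`. Then the induced operator `T̂` on the quotient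
`X/M` (i.e. any bounded operator with `T̂ ∘ π = π ∘ T`, where `π : X → X/M` is the
quotient map) is `J^mix`-class. -/
theorem stmt13 {X : Type*} [NormedAddCommGroup X] [NormedSpace ℂ X] [CompleteSpace X]
    (T : X →L[ℂ] X) (hT : ∃ x : X, x ≠ 0 ∧ Jmix T x = Set.univ)
    (M : Submodule ℂ X) (hMclosed : IsClosed (M : Set X))
    (hMinv : ∀ x ∈ M, T x ∈ M)
    (hMsub : (M : Set X) ⊆ {x : X | Jmix T x = Set.univ})
    (hMne : ({x : X | Jmix T x = Set.univ} \ (M : Set X)).Nonempty)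
    (That : (X ⧸ M) →L[ℂ] (X ⧸ M))
    (hThat : ∀ x : X, That (M.mkQ x) = M.mkQ (T x)) :
    ∃ q : X ⧸ M, q ≠ 0 ∧ Jmix That q = Set.univ :=
  stmt13_general T M hMne That hThat
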